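/- arXiv:1911.00765 — 5 statements merged into one kernel-verified Lean document; each statement's English description precedes it below -/
import Mathlib

section
/- Let X and Y be random variables over the same domain X. If P_{x ∼ X}[ P[X = x] / P[Y = x] ≥ 2^k ] ≤ β, then the β-approximate max-information satisfies I_∞^β(X; Y) ≤ k. -/
open MeasureTheory ENNReal

/- Split `O` along the event `B = {x | 2^k Y(x) ≤ X(x)}`: the part inside `B` has `X`-mass at most
`X(B) ≤ β`, and outside `B` the density bound `X ≤ 2^k Y` holds pointwise, so `X(O \ B) ≤ 2^k Y(O)`.
Working with the outer measures of the PMFs avoids any measurability requirement on `B`. -/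

theorem PMF.toOuterMeasure_le_add_mul {α : Type*} (p q : PMF α) (c : ℝ≥0∞) {s B : Set α}
    (hle : ∀ x ∈ s \ B, p x ≤ c * q x) :
    p.toOuterMeasure s ≤ p.toOuterMeasure B + c * q.toOuterMeasure s := by
  simp only [PMF.toOuterMeasure_apply]
  rw [← ENNReal.tsum_mul_left, ← ENNReal.tsum_add]
  refine ENNReal.tsum_le_tsum fun x => ?_
  by_cases hs : x ∈ s
  · by_cases hB : x ∈ B
    · simp [hs, hB]
    · simpa [hs, hB] using hle x ⟨hs, hB⟩
  · simp [hs]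

theorem stmt1_general {α : Type*} [MeasurableSpace α]
    (X Y : PMF α) (k β : ℝ)
    (h : (X.toMeasure {x | (2 : ℝ) ^ k * (Y x).toReal ≤ (X x).toReal}).toReal ≤ β) :
    ∀ O : Set α, MeasurableSet O → β < (X.toMeasure O).toReal →
      (X.toMeasure O).toReal - β ≤ (2 : ℝ) ^ k * (Y.toMeasure O).toReal := by
  intro O hO _
  set B : Set α := {x | (2 : ℝ) ^ k * (Y x).toReal ≤ (X x).toReal}
  have hle : ∀ x ∈ O \ B, X x ≤ ENNReal.ofReal (2 ^ k) * Y x := by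
    rintro x ⟨-, hx⟩
    rw [← ofReal_toReal (X.apply_ne_top x), ← ofReal_toReal (Y.apply_ne_top x),
      ← ofReal_mul (by positivity)]
    exact ofReal_le_ofReal (not_le.mp hx).le
  have key : X.toMeasure O ≤ X.toMeasure B + ENNReal.ofReal (2 ^ k) * Y.toMeasure O := by
    rw [X.toMeasure_apply_eq_toOuterMeasure_apply hO, Y.toMeasure_apply_eq_toOuterMeasure_apply hO]
    exact (X.toOuterMeasure_le_add_mul Y _ hle).trans
      (add_le_add_left (X.toOuterMeasure_apply_le_toMeasure_apply B) _)
  have key_real := toReal_mono (by finiteness) key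
  rw [toReal_add (by finiteness) (by finiteness), toReal_mul, toReal_ofReal (by positivity)]
    at key_real
  linarith

/-- Lemma 18 of Dwork et al.: if P_{x∼X}[P[X=x]/P[Y=x] ≥ 2^k] ≤ β, then I_∞^β(X;Y) ≤ k,
i.e., for every set O with P[X ∈ O] > β we have (P[X∈O] − β) ≤ 2^k · P[Y∈O].
The event {P[X=x]/P[Y=x] ≥ 2^k} is expressed in product form 2^k · P[Y=x] ≤ P[X=x]. -/
theorem stmt1 {α : Type*} [MeasurableSpace α] [MeasurableSingletonClass α]
    (X Y : PMF α) (k β : ℝ)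
    (h : (X.toMeasure {x | (2 : ℝ) ^ k * (Y x).toReal ≤ (X x).toReal}).toReal ≤ β) :
    ∀ O : Set α, MeasurableSet O → β < (X.toMeasure O).toReal →
      (X.toMeasure O).toReal - β ≤ (2 : ℝ) ^ k * (Y.toMeasure O).toReal :=
  stmt1_general X Y k β h
end

section
/- Let X = (X_1,...,X_n) be a random database and Y an ε-Bayesian differentially private randomized algorithm with discrete output. Then for any β > 0, the β-approximate max-information satisfies I_∞^β(X; Y(X)) ≤ (2ε²n + ε·√(2n·ln(2/β)))·log₂(e). -/
open MeasureTheory ENNReal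
open scoped Classical

/-- The conditional probability P[Y ∈ 𝒴 ∣ X_i = v, X_S = xs|_S] for a randomized mechanism `M`
applied to a random database with (possibly correlated) distribution `μ`. -/
noncomputable def condOut {n : ℕ} {α : Fin n → Type*} {γ : Type*}
    (μ : PMF (∀ i, α i)) (M : (∀ i, α i) → PMF γ)
    (i : Fin n) (S : Finset (Fin n)) (v : α i) (xs : ∀ j, α j) (𝒴 : Set γ) : ℝ≥0∞ :=
  (∑' x : ∀ j, α j,
      if x i = v ∧ ∀ j ∈ S, x j = xs j then μ x * (M x).toOuterMeasure 𝒴 else 0) /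
  (∑' x : ∀ j, α j, if x i = v ∧ ∀ j ∈ S, x j = xs j then μ x else 0)

/-- ε-Bayesian differential privacy: for every attacked index `i`, every known set `S` of other
tuples, all values `v ≠ v'` of tuple `i`, all values `xs` of the tuples in `S`, and every output
event `𝒴`, the conditional probabilities differ by a factor of at most `e^ε`. -/
def BayesianDP {n : ℕ} {α : Fin n → Type*} {γ : Type*}
    (μ : PMF (∀ i, α i)) (M : (∀ i, α i) → PMF γ) (ε : ℝ) : Prop :=
  ∀ (i : Fin n) (S : Finset (Fin n)), i ∉ S →
    ∀ (v v' : α i), v ≠ v' → ∀ (xs : ∀ j, α j) (𝒴 : Set γ),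
      condOut μ M i S v xs 𝒴 ≤ ENNReal.ofReal (Real.exp ε) * condOut μ M i S v' xs 𝒴

/-!
Write `q_T(x, y) = P[Y = y | X_T = x_T]`. Bayesian differential privacy says that revealing one
more coordinate `i ∉ T` changes `q` by a factor in `[e^{-ε}, e^ε]`, while `q_T` is the average of
`q_{T ∪ {i}}`: along `∅ ⊆ {0} ⊆ {0, 1} ⊆ ⋯` the `q_T` form a martingale with bounded
multiplicative increments, running from `P[Y = y]` to `P[Y = y | X = x]`. Convexity of
`t ↦ t ^ (r + 1)` on `[e^{-ε}, e^ε]` shows that each step multiplies `E[q_T ^ (r + 1)]` by at most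
`cosh (rε + ε/2) / cosh (ε/2) ≤ exp (r²ε²/2 + rε²/2)`. Markov's inequality with
`r = √(2 ln (2/β) / n) / ε` then bounds by `β` the joint mass of the pairs `(x, y)` with
`P[Y = y | X = x] > e^E P[Y = y]`, where `E = 2ε²n + ε√(2n ln (2/β))`; off these pairs the joint
law is at most `e^E` times the product of the marginals.
-/

namespace Real

lemma sinh_le_mul_cosh {x : ℝ} (hx : 0 ≤ x) : sinh x ≤ x * cosh x := by
  have hderiv : ∀ t, HasDerivAt (fun u => u * cosh u - sinh u) (t * sinh t) t := fun t => by
    have h := ((hasDerivAt_id' t).mul (hasDerivAt_cosh t)).sub (hasDerivAt_sinh t)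
    exact h.congr_deriv (by ring)
  have hmono : MonotoneOn (fun u => u * cosh u - sinh u) (Set.Ici 0) := by
    refine monotoneOn_of_deriv_nonneg (convex_Ici 0) (by fun_prop)
      (fun t _ => (hderiv t).differentiableAt.differentiableWithinAt) fun t ht => ?_
    rw [interior_Ici] at ht
    rw [(hderiv t).deriv]
    exact mul_nonneg ht.out.le (sinh_nonneg_iff.2 ht.out.le)
  simpa using hmono Set.self_mem_Ici hx hx

lemma cosh_add_div_cosh_le {u h : ℝ} (hu : 0 ≤ u) (hh : 0 ≤ h) :
    cosh (u + h) / cosh h ≤ exp (u ^ 2 / 2 + u * h) := by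
  have hsinh : sinh u * sinh h ≤ u * cosh u * (h * cosh h) :=
    mul_le_mul (sinh_le_mul_cosh hu) (sinh_le_mul_cosh hh) (sinh_nonneg_iff.2 hh)
      (by positivity)
  have hcosh : cosh u ≤ exp (u ^ 2 / 2) := cosh_le_exp_half_sq u
  have hlin : 1 + u * h ≤ exp (u * h) := by linarith [add_one_le_exp (u * h)]
  rw [div_le_iff₀ (cosh_pos h), cosh_add, exp_add]
  calc cosh u * cosh h + sinh u * sinh h ≤ cosh u * (1 + u * h) * cosh h := by
        nlinarith [cosh_pos u, cosh_pos h]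
    _ ≤ exp (u ^ 2 / 2) * exp (u * h) * cosh h := by gcongr

lemma two_rpow_mul_logb_exp_one (x : ℝ) : (2 : ℝ) ^ (x * logb 2 (exp 1)) = exp x := by
  rw [mul_comm, rpow_mul zero_le_two, rpow_logb two_pos (by norm_num) (exp_pos 1), exp_one_rpow]

end Real

lemma ConvexOn.mul_sub_le_chord {s : Set ℝ} {f : ℝ → ℝ} (hf : ConvexOn ℝ s f) {a b t : ℝ}
    (ha : a ∈ s) (hb : b ∈ s) (hat : a ≤ t) (htb : t ≤ b) :
    f t * (b - a) ≤ f a * (b - t) + f b * (t - a) := by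
  rcases eq_or_lt_of_le (hat.trans htb) with rfl | hab
  · obtain rfl : t = a := le_antisymm htb hat
    simp
  have hba : 0 < b - a := sub_pos.2 hab
  have hconv := hf.2 ha hb (div_nonneg (sub_nonneg.2 htb) hba.le)
    (div_nonneg (sub_nonneg.2 hat) hba.le) (by field_simp; ring)
  have ht : ((b - t) / (b - a)) • a + ((t - a) / (b - a)) • b = t := by
    simp only [smul_eq_mul]; field_simp; ring
  rw [ht, smul_eq_mul, smul_eq_mul] at hconv
  calc f t * (b - a) ≤ ((b - t) / (b - a) * f a + (t - a) / (b - a) * f b) * (b - a) := by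
        gcongr
    _ = f a * (b - t) + f b * (t - a) := by field_simp

section RpowChord

open Real

/-- On `[exp (-ε), exp ε]` the chord of `t ↦ t ^ p` is
`t ↦ chordSlope ε p * t - chordDrop ε p`. -/
noncomputable def chordSlope (ε p : ℝ) : ℝ := (exp ε ^ p - exp (-ε) ^ p) / (exp ε - exp (-ε))

noncomputable def chordDrop (ε p : ℝ) : ℝ :=
  (exp (-ε) * exp ε ^ p - exp ε * exp (-ε) ^ p) / (exp ε - exp (-ε))

variable {ε p : ℝ}

lemma rpow_le_chordSlope_mul_sub_chordDrop (hε : 0 < ε) (hp : 1 ≤ p) {t : ℝ}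
    (hat : exp (-ε) ≤ t) (htb : t ≤ exp ε) : t ^ p ≤ chordSlope ε p * t - chordDrop ε p := by
  have hchord := (convexOn_rpow hp).mul_sub_le_chord (Set.mem_Ici.2 (exp_pos (-ε)).le)
    (Set.mem_Ici.2 (exp_pos ε).le) hat htb
  rw [chordSlope, chordDrop, div_mul_eq_mul_div, ← sub_div,
    le_div_iff₀ (sub_pos.2 (exp_lt_exp.2 (by linarith)))]
  linear_combination hchord

lemma chordDrop_nonneg (hε : 0 ≤ ε) (hp : 1 ≤ p) : 0 ≤ chordDrop ε p := by
  rw [chordDrop, ← exp_mul, ← exp_mul, ← exp_add, ← exp_add]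
  refine div_nonneg (sub_nonneg.2 (exp_le_exp.2 (by nlinarith))) ?_
  exact sub_nonneg.2 (exp_le_exp.2 (by linarith))

lemma chordSlope_sub_chordDrop (hε : 0 < ε) (p : ℝ) :
    chordSlope ε p - chordDrop ε p = cosh ((p - 1) * ε + ε / 2) / cosh (ε / 2) := by
  set e := exp (ε / 2)
  set z := exp ((p - 1) * ε + ε / 2)
  have he : 1 < e := one_lt_exp_iff.2 (by positivity)
  have hb : exp ε = e * e := by rw [← exp_add]; ring_nf
  have ha : exp (-ε) = (e * e)⁻¹ := by rw [exp_neg, hb]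
  have hbp : exp ε ^ p = z * e := by rw [← exp_mul, ← exp_add]; ring_nf
  have hap : exp (-ε) ^ p = (z * e)⁻¹ := by
    rw [← exp_mul, show -ε * p = -(((p - 1) * ε + ε / 2) + ε / 2) by ring, exp_neg, exp_add]
  have hcz : cosh ((p - 1) * ε + ε / 2) = (z + z⁻¹) / 2 := by rw [cosh_eq, exp_neg]
  have hce : cosh (ε / 2) = (e + e⁻¹) / 2 := by rw [cosh_eq, exp_neg]
  have hee : e ^ 4 - 1 ≠ 0 := by
    have : 1 < e ^ 4 := one_lt_pow₀ he (by norm_num)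
    linarith
  rw [chordSlope, chordDrop, hbp, hap, hb, ha, hcz, hce]
  field_simp
  ring

lemma rpow_mul_self_add_chordDrop_le (hε : 0 < ε) {r u w : ℝ} (hr : 0 ≤ r) (hu : 0 ≤ u)
    (hw : 0 ≤ w) (huw : u ≤ exp ε * w) (hwu : w ≤ exp ε * u) :
    u ^ r * u + chordDrop ε (r + 1) * (w ^ r * w) ≤ chordSlope ε (r + 1) * (w ^ r * u) := by
  rcases hw.eq_or_lt with rfl | hw
  · obtain rfl : u = 0 := le_antisymm (by simpa using huw) hu
    simp
  have hat : exp (-ε) ≤ u / w := by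
    rw [le_div_iff₀ hw, exp_neg, inv_mul_le_iff₀ (exp_pos ε)]
    exact hwu
  have hchord := rpow_le_chordSlope_mul_sub_chordDrop hε (by linarith : (1 : ℝ) ≤ r + 1) hat
    ((div_le_iff₀ hw).2 huw)
  have hscaled :
      u ^ r * u ≤ chordSlope ε (r + 1) * (w ^ r * u) - chordDrop ε (r + 1) * (w ^ r * w) :=
    calc u ^ r * u = (u / w) ^ (r + 1) * (w ^ r * w) := by
          rw [div_rpow hu hw.le, rpow_add_one' hu (by linarith),
            rpow_add_one' hw.le (by linarith), div_mul_cancel₀ _ (by positivity)]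
      _ ≤ (chordSlope ε (r + 1) * (u / w) - chordDrop ε (r + 1)) * (w ^ r * w) := by gcongr
      _ = chordSlope ε (r + 1) * (w ^ r * u) - chordDrop ε (r + 1) * (w ^ r * w) := by
          field_simp
  linarith

end RpowChord

lemma ENNReal.rpow_mul_self_add_chordDrop_le {ε r : ℝ} (hε : 0 < ε) (hr : 0 ≤ r)
    {u w : ℝ≥0∞} (hu : u ≠ ⊤) (hw : w ≠ ⊤) (huw : u ≤ ENNReal.ofReal (Real.exp ε) * w)
    (hwu : w ≤ ENNReal.ofReal (Real.exp ε) * u) :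
    u ^ r * u + ENNReal.ofReal (chordDrop ε (r + 1)) * (w ^ r * w)
      ≤ ENNReal.ofReal (chordSlope ε (r + 1)) * (w ^ r * u) := by
  obtain ⟨u, hu0, rfl⟩ : ∃ a, 0 ≤ a ∧ ENNReal.ofReal a = u :=
    ⟨u.toReal, toReal_nonneg, ofReal_toReal hu⟩
  obtain ⟨w, hw0, rfl⟩ : ∃ a, 0 ≤ a ∧ ENNReal.ofReal a = w :=
    ⟨w.toReal, toReal_nonneg, ofReal_toReal hw⟩
  have hexp := (Real.exp_pos ε).le
  rw [← ofReal_mul hexp, ofReal_le_ofReal_iff (by positivity)] at huw hwu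
  have hD := chordDrop_nonneg hε.le (by linarith : (1 : ℝ) ≤ r + 1)
  rw [ofReal_rpow_of_nonneg hu0 hr, ofReal_rpow_of_nonneg hw0 hr, ← ofReal_mul (by positivity),
    ← ofReal_mul (by positivity), ← ofReal_mul hD, ← ofReal_add (by positivity) (by positivity),
    ← ofReal_mul (by positivity), ← ofReal_mul' (by positivity)]
  exact ofReal_le_ofReal (_root_.rpow_mul_self_add_chordDrop_le hε hr hu0 hw0 huw hwu)

lemma ENNReal.ite_lt_mul_rpow_le {a b w : ℝ≥0∞} {r : ℝ} (hr : 0 ≤ r) :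
    (if b < a then w else 0) * b ^ r ≤ w * a ^ r := by
  split_ifs with h
  · gcongr
  · simp

lemma chernoff_exponent_le_log {ε β r : ℝ} {n : ℕ} (hn : 0 < n) (hβ : 0 < β) (hβ2 : β ≤ 2)
    (hr : 0 ≤ r)
    (hrε : r * ε = √(2 * Real.log (2 / β) / n)) :
    n * ((r * ε) ^ 2 / 2 + r * ε * (ε / 2))
      - r * (2 * ε ^ 2 * n + ε * √(2 * n * Real.log (2 / β))) ≤ Real.log β := by
  set L := Real.log (2 / β)
  have hL : 0 ≤ L := Real.log_nonneg (by rw [le_div_iff₀ hβ]; linarith)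
  have hnR : (0 : ℝ) < n := Nat.cast_pos.2 hn
  have hsq : n * (r * ε) ^ 2 = 2 * L := by
    rw [hrε, Real.sq_sqrt (by positivity)]
    field_simp
  have hcross : r * ε * √(2 * n * L) = 2 * L := by
    rw [hrε, ← Real.sqrt_mul (by positivity), show 2 * L / n * (2 * n * L) = (2 * L) ^ 2 by
      field_simp, Real.sqrt_sq (by positivity)]
  have hlog : -L ≤ Real.log β := by
    rw [show L = Real.log (2 / β) from rfl, Real.log_div two_ne_zero hβ.ne']
    linarith [Real.log_nonneg one_le_two]
  have hpos : 0 ≤ n * r * ε ^ 2 := by positivity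
  linarith

namespace PMF

variable {Ω β β' γ : Type*} (μ : PMF Ω) (κ : Ω → PMF γ)

noncomputable def fiberMass (f : Ω → β) (x : Ω) : ℝ≥0∞ :=
  ∑' x', if f x' = f x then μ x' else 0

noncomputable def fiberJointMass (f : Ω → β) (x : Ω) (y : γ) : ℝ≥0∞ :=
  ∑' x', if f x' = f x then μ x' * κ x' y else 0

/-- `P[Y = y | f X = f x]` for `X ∼ μ` and `Y ∼ κ X`
(junk value `0` when `P[f X = f x] = 0`). -/
noncomputable def condProb (f : Ω → β) (x : Ω) (y : γ) : ℝ≥0∞ :=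
  μ.fiberJointMass κ f x y / μ.fiberMass f x

noncomputable def condMoment (f : Ω → β) (y : γ) (r : ℝ) : ℝ≥0∞ :=
  ∑' x, μ x * (μ.condProb κ f x y ^ r * μ.condProb κ f x y)

variable {μ κ} {f : Ω → β}

lemma fiberMass_congr {x x' : Ω} (h : f x' = f x) : μ.fiberMass f x' = μ.fiberMass f x := by
  simp only [fiberMass, h]

lemma condProb_congr {x x' : Ω} (h : f x' = f x) (y : γ) :
    μ.condProb κ f x' y = μ.condProb κ f x y := by
  simp only [condProb, fiberMass, fiberJointMass, h]

lemma fiberMass_le_one (f : Ω → β) (x : Ω) : μ.fiberMass f x ≤ 1 :=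
  (ENNReal.tsum_le_tsum fun x' => by split_ifs <;> simp).trans μ.tsum_coe.le

lemma apply_le_fiberMass (f : Ω → β) (x : Ω) : μ x ≤ μ.fiberMass f x :=
  (if_pos rfl).symm.le.trans (ENNReal.le_tsum x)

lemma fiberMass_ne_top (f : Ω → β) (x : Ω) : μ.fiberMass f x ≠ ⊤ :=
  ne_top_of_le_ne_top one_ne_top (fiberMass_le_one f x)

lemma fiberJointMass_le_fiberMass (f : Ω → β) (x : Ω) (y : γ) :
    μ.fiberJointMass κ f x y ≤ μ.fiberMass f x :=
  ENNReal.tsum_le_tsum fun x' => by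
    split_ifs
    · exact mul_le_of_le_one_right' ((κ x').coe_le_one y)
    · rfl

lemma condProb_le_one (f : Ω → β) (x : Ω) (y : γ) : μ.condProb κ f x y ≤ 1 :=
  ENNReal.div_le_of_le_mul (by rw [one_mul]; exact fiberJointMass_le_fiberMass f x y)

lemma condProb_ne_top (f : Ω → β) (x : Ω) (y : γ) : μ.condProb κ f x y ≠ ⊤ :=
  ne_top_of_le_ne_top one_ne_top (condProb_le_one f x y)

lemma fiberJointMass_eq_condProb_mul (f : Ω → β) (x : Ω) (y : γ) :
    μ.fiberJointMass κ f x y = μ.condProb κ f x y * μ.fiberMass f x := by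
  rcases eq_or_ne (μ.fiberMass f x) 0 with h | h
  · rw [h, mul_zero]
    exact le_antisymm (h ▸ fiberJointMass_le_fiberMass f x y) zero_le
  · rw [condProb, ENNReal.div_mul_cancel h (fiberMass_ne_top f x)]

lemma tsum_mul_mul_condProb {φ : Ω → ℝ≥0∞} (hφ : ∀ x x', f x' = f x → φ x' = φ x) (y : γ) :
    ∑' x, μ x * (φ x * μ.condProb κ f x y) = ∑' x, μ x * (φ x * κ x y) := by
  calc ∑' x, μ x * (φ x * μ.condProb κ f x y)
      = ∑' x, ∑' x', if f x' = f x
          then μ x * φ x * (μ.fiberMass f x)⁻¹ * (μ x' * κ x' y) else 0 := by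
        refine tsum_congr fun x => ?_
        rw [condProb, fiberJointMass, div_eq_mul_inv, ← ENNReal.tsum_mul_right,
          ← ENNReal.tsum_mul_left, ← ENNReal.tsum_mul_left]
        refine tsum_congr fun x' => ?_
        split_ifs <;> ring
    _ = ∑' x', ∑' x, if f x' = f x
          then μ x * φ x * (μ.fiberMass f x)⁻¹ * (μ x' * κ x' y) else 0 := ENNReal.tsum_comm
    _ = ∑' x', (∑' x, if f x = f x' then μ x else 0)
          * ((μ.fiberMass f x')⁻¹ * (μ x' * (φ x' * κ x' y))) := by
        refine tsum_congr fun x' => ?_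
        rw [← ENNReal.tsum_mul_right]
        refine tsum_congr fun x => ?_
        by_cases h : f x = f x'
        · rw [if_pos h.symm, if_pos h, hφ x' x h, fiberMass_congr h]
          ring
        · rw [if_neg (Ne.symm h), if_neg h, zero_mul]
    _ = ∑' x', μ x' * (φ x' * κ x' y) := by
        refine tsum_congr fun x' => ?_
        change μ.fiberMass f x' * _ = _
        rcases eq_or_ne (μ x') 0 with h | h
        · simp [h]
        · rw [← mul_assoc, ENNReal.mul_inv_cancel
            (ne_of_gt (lt_of_lt_of_le (pos_iff_ne_zero.2 h) (apply_le_fiberMass f x')))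
            (fiberMass_ne_top f x'), one_mul]

lemma condProb_of_forall_eq (hf : ∀ x x', f x = f x') (x : Ω) (y : γ) :
    μ.condProb κ f x y = μ.bind κ y := by
  simp only [condProb, fiberMass, fiberJointMass, hf _ x, if_true, μ.tsum_coe, div_one,
    bind_apply]

lemma condProb_of_injective (hf : f.Injective) {x : Ω} (hx : μ x ≠ 0) (y : γ) :
    μ.condProb κ f x y = κ x y := by
  have hfiber : ∀ x', f x' = f x ↔ x' = x := fun x' => hf.eq_iff
  simp only [condProb, fiberMass, fiberJointMass, hfiber, tsum_ite_eq]
  rw [mul_comm, ENNReal.mul_div_cancel_right hx (μ.apply_ne_top x)]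

lemma condMoment_of_forall_eq (hf : ∀ x x', f x = f x') (y : γ) (r : ℝ) :
    μ.condMoment κ f y r = μ.bind κ y ^ r * μ.bind κ y := by
  simp only [condMoment, condProb_of_forall_eq hf, ENNReal.tsum_mul_right, μ.tsum_coe, one_mul]

lemma condMoment_le_one (f : Ω → β) (y : γ) {r : ℝ} (hr : 0 ≤ r) :
    μ.condMoment κ f y r ≤ 1 := by
  refine (ENNReal.tsum_le_tsum fun x => mul_le_of_le_one_right' ?_).trans μ.tsum_coe.le
  exact mul_le_one' (ENNReal.rpow_le_one (condProb_le_one f x y) hr) (condProb_le_one f x y)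

/-- Since `condProb κ f` is the `μ`-average of `condProb κ g` over each fibre of `f`
(`hmart` below), convexity of `t ↦ t ^ (r + 1)` on `[e^{-ε}, e^ε]` bounds the growth of the moment
by the value at `t = 1` of the chord of that function. -/
lemma condMoment_le_of_refines {g : Ω → β'} (hgf : ∀ x x', g x' = g x → f x' = f x)
    {ε r : ℝ} (hε : 0 < ε) (hr : 0 ≤ r) (y : γ)
    (hle : ∀ x, μ x ≠ 0 →
      μ.condProb κ g x y ≤ ENNReal.ofReal (Real.exp ε) * μ.condProb κ f x y)
    (hge : ∀ x, μ x ≠ 0 →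
      μ.condProb κ f x y ≤ ENNReal.ofReal (Real.exp ε) * μ.condProb κ g x y) :
    μ.condMoment κ g y r ≤
      ENNReal.ofReal (Real.cosh (r * ε + ε / 2) / Real.cosh (ε / 2)) * μ.condMoment κ f y r := by
  have hmart : ∑' x, μ x * (μ.condProb κ f x y ^ r * μ.condProb κ g x y)
      = μ.condMoment κ f y r := by
    rw [condMoment, tsum_mul_mul_condProb (fun x x' h => by rw [condProb_congr (hgf x x' h)]),
      tsum_mul_mul_condProb fun x x' h => by rw [condProb_congr h]]
  have hpoint : ∀ x, μ x * (μ.condProb κ g x y ^ r * μ.condProb κ g x y)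
      + ENNReal.ofReal (chordDrop ε (r + 1))
        * (μ x * (μ.condProb κ f x y ^ r * μ.condProb κ f x y))
      ≤ ENNReal.ofReal (chordSlope ε (r + 1))
        * (μ x * (μ.condProb κ f x y ^ r * μ.condProb κ g x y)) := by
    intro x
    rcases eq_or_ne (μ x) 0 with h | h
    · simp [h]
    calc _ = μ x * (μ.condProb κ g x y ^ r * μ.condProb κ g x y
          + ENNReal.ofReal (chordDrop ε (r + 1))
            * (μ.condProb κ f x y ^ r * μ.condProb κ f x y)) := by ring
      _ ≤ μ x * (ENNReal.ofReal (chordSlope ε (r + 1))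
          * (μ.condProb κ f x y ^ r * μ.condProb κ g x y)) := by
          gcongr
          exact ENNReal.rpow_mul_self_add_chordDrop_le hε hr (condProb_ne_top g x y)
            (condProb_ne_top f x y) (hle x h) (hge x h)
      _ = _ := by ring
  have hsum := ENNReal.tsum_le_tsum hpoint
  rw [ENNReal.tsum_add, ENNReal.tsum_mul_left, ENNReal.tsum_mul_left, hmart] at hsum
  have hslope : chordSlope ε (r + 1)
      = Real.cosh (r * ε + ε / 2) / Real.cosh (ε / 2) + chordDrop ε (r + 1) := by
    have h := chordSlope_sub_chordDrop hε (r + 1)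
    rw [add_sub_cancel_right] at h
    linarith
  rw [hslope, ENNReal.ofReal_add (by positivity) (chordDrop_nonneg hε.le (by linarith)),
    add_mul] at hsum
  exact (ENNReal.add_le_add_iff_right (mul_ne_top ofReal_ne_top
    (ne_top_of_le_ne_top one_ne_top (condMoment_le_one f y hr)))).1 hsum

end PMF

namespace PMF

variable {Ω γ : Type*}

lemma bind_map_prodMk_apply (μ : PMF Ω) (κ : Ω → PMF γ) (a : Ω) (b : γ) :
    (μ.bind fun x => (κ x).map fun y => (x, y)) (a, b) = μ a * κ a b := by
  simp only [bind_apply, map_apply, Prod.mk.injEq, ite_and]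
  rw [tsum_eq_single a fun x hx => by simp [Ne.symm hx]]
  simp

lemma toMeasure_prod_toMeasure [MeasurableSpace Ω] [MeasurableSpace γ] (μ : PMF Ω)
    (ν : PMF γ) :
    μ.toMeasure.prod ν.toMeasure = (μ.bind fun x => ν.map fun y => (x, y)).toMeasure := by
  refine Measure.prod_eq fun s t hs ht => ?_
  rw [toMeasure_apply _ (hs.prod ht), toMeasure_apply _ hs, toMeasure_apply _ ht,
    ENNReal.tsum_prod', ← ENNReal.tsum_mul_right]
  refine tsum_congr fun a => ?_
  rw [← ENNReal.tsum_mul_left]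
  refine tsum_congr fun b => ?_
  simp only [Set.indicator, Set.mem_prod, bind_map_prodMk_apply]
  split_ifs <;> simp_all

lemma toMeasure_apply_le_mul_add [MeasurableSpace Ω] (p q : PMF Ω) (c : ℝ≥0∞) {O : Set Ω}
    (hO : MeasurableSet O) :
    p.toMeasure O ≤ c * q.toMeasure O + ∑' z, if c * q z < p z then p z else 0 := by
  rw [toMeasure_apply _ hO, toMeasure_apply _ hO, ← ENNReal.tsum_mul_left, ← ENNReal.tsum_add]
  refine ENNReal.tsum_le_tsum fun z => ?_
  by_cases hz : z ∈ O
  · split_ifs with hlt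
    · simp [Set.indicator_of_mem hz]
    · simpa [Set.indicator_of_mem hz] using not_lt.1 hlt
  · simp [Set.indicator_of_notMem hz]

end PMF

section Coordinates

variable {ι : Type*} {α : ι → Type*}

lemma Finset.restrict_eq_restrict_iff {T : Finset ι} {x x' : ∀ j, α j} :
    T.restrict x' = T.restrict x ↔ ∀ j ∈ T, x' j = x j := by
  simp [funext_iff, Finset.restrict]

lemma Finset.restrict_insert_eq_restrict_update_iff [DecidableEq ι] {i : ι} {T : Finset ι}
    (hi : i ∉ T) {x x' : ∀ j, α j} {v : α i} :
    (insert i T).restrict x' = (insert i T).restrict (Function.update x i v)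
      ↔ x' i = v ∧ T.restrict x' = T.restrict x := by
  rw [restrict_eq_restrict_iff, restrict_eq_restrict_iff, forall_mem_insert,
    Function.update_self]
  refine and_congr_right' (forall₂_congr fun j hj => ?_)
  rw [Function.update_of_ne (ne_of_mem_of_not_mem hj hi)]

lemma tsum_ite_restrict_eq_tsum_update [DecidableEq ι] {i : ι} {T : Finset ι} (hi : i ∉ T)
    (x : ∀ j, α j) (φ : (∀ j, α j) → ℝ≥0∞) :
    (∑' x', if T.restrict x' = T.restrict x then φ x' else 0)
      = ∑' v : α i, ∑' x', if (insert i T).restrict x' = (insert i T).restrict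
          (Function.update x i v) then φ x' else 0 := by
  simp_rw [Finset.restrict_insert_eq_restrict_update_iff hi, ite_and]
  rw [ENNReal.tsum_comm]
  exact tsum_congr fun x' => (tsum_ite_eq' (x' i) fun _ => _).symm

lemma PMF.fiberMass_restrict_eq_tsum [DecidableEq ι] (μ : PMF (∀ j, α j)) {i : ι}
    {T : Finset ι} (hi : i ∉ T) (x : ∀ j, α j) :
    μ.fiberMass T.restrict x
      = ∑' v : α i, μ.fiberMass (insert i T).restrict (Function.update x i v) := by
  unfold PMF.fiberMass
  convert tsum_ite_restrict_eq_tsum_update hi x μ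

lemma PMF.fiberJointMass_restrict_eq_tsum [DecidableEq ι] {γ : Type*} (μ : PMF (∀ j, α j))
    (κ : (∀ j, α j) → PMF γ) {i : ι} {T : Finset ι} (hi : i ∉ T) (x : ∀ j, α j) (y : γ) :
    μ.fiberJointMass κ T.restrict x y
      = ∑' v : α i, μ.fiberJointMass κ (insert i T).restrict (Function.update x i v) y := by
  unfold PMF.fiberJointMass
  convert tsum_ite_restrict_eq_tsum_update hi x fun x' => μ x' * κ x' y

lemma Finset.restrict_univ_injective [Fintype ι] :
    (Finset.univ : Finset ι).restrict (π := α) |>.Injective :=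
  fun _ _ hxx' => funext fun j => congrFun hxx' ⟨j, Finset.mem_univ j⟩

end Coordinates

section BayesianPrivacy

variable {n : ℕ} {α : Fin n → Type*} {γ : Type*} {μ : PMF (∀ i, α i)}
  {M : (∀ i, α i) → PMF γ}

lemma condOut_singleton_eq_condProb {i : Fin n} {S : Finset (Fin n)} (hi : i ∉ S) (v : α i)
    (xs : ∀ j, α j) (y : γ) :
    condOut μ M i S v xs {y}
      = μ.condProb M (insert i S).restrict (Function.update xs i v) y := by
  simp only [PMF.condProb, PMF.fiberMass, PMF.fiberJointMass,
    Finset.restrict_insert_eq_restrict_update_iff hi]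
  simp only [condOut, PMF.toOuterMeasure_apply_singleton, Finset.restrict_eq_restrict_iff]

namespace BayesianDP

variable {ε : ℝ} {i : Fin n} {T : Finset (Fin n)}

lemma condProb_update_le (h : BayesianDP μ M ε) (hε : 0 ≤ ε) (hi : i ∉ T) (x : ∀ j, α j)
    (v v' : α i) (y : γ) :
    μ.condProb M (insert i T).restrict (Function.update x i v) y
      ≤ ENNReal.ofReal (Real.exp ε)
        * μ.condProb M (insert i T).restrict (Function.update x i v') y := by
  rcases eq_or_ne v v' with rfl | hv
  · exact le_mul_of_one_le_left zero_le (ENNReal.one_le_ofReal.2 (Real.one_le_exp hε))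
  · rw [← condOut_singleton_eq_condProb hi, ← condOut_singleton_eq_condProb hi]
    exact h i T hi v v' hv x {y}

lemma condProb_le_exp_mul_condProb_insert (h : BayesianDP μ M ε) (hε : 0 ≤ ε) (hi : i ∉ T)
    (x : ∀ j, α j) (y : γ) :
    μ.condProb M T.restrict x y
      ≤ ENNReal.ofReal (Real.exp ε) * μ.condProb M (insert i T).restrict x y := by
  refine ENNReal.div_le_of_le_mul ?_
  rw [μ.fiberJointMass_restrict_eq_tsum M hi, μ.fiberMass_restrict_eq_tsum hi,
    ← ENNReal.tsum_mul_left]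
  refine ENNReal.tsum_le_tsum fun v => ?_
  rw [PMF.fiberJointMass_eq_condProb_mul]
  gcongr
  simpa using h.condProb_update_le hε hi x v (x i) y

lemma condProb_insert_le_exp_mul_condProb (h : BayesianDP μ M ε) (hε : 0 ≤ ε) (hi : i ∉ T)
    {x : ∀ j, α j} (hx : μ x ≠ 0) (y : γ) :
    μ.condProb M (insert i T).restrict x y
      ≤ ENNReal.ofReal (Real.exp ε) * μ.condProb M T.restrict x y := by
  have hmass : μ.fiberMass T.restrict x ≠ 0 :=
    (lt_of_lt_of_le (pos_iff_ne_zero.2 hx) (PMF.apply_le_fiberMass _ x)).ne'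
  conv_rhs => rw [PMF.condProb]
  rw [← mul_div_assoc, ENNReal.le_div_iff_mul_le (Or.inl hmass)
    (Or.inl (PMF.fiberMass_ne_top _ x)), μ.fiberJointMass_restrict_eq_tsum M hi,
    μ.fiberMass_restrict_eq_tsum hi, ← ENNReal.tsum_mul_left, ← ENNReal.tsum_mul_left]
  refine ENNReal.tsum_le_tsum fun v => ?_
  rw [PMF.fiberJointMass_eq_condProb_mul, ← mul_assoc]
  gcongr
  simpa using h.condProb_update_le hε hi x (x i) v y

lemma condMoment_restrict_le (h : BayesianDP μ M ε) (hε : 0 < ε) {r : ℝ} (hr : 0 ≤ r) (y : γ)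
    (T : Finset (Fin n)) :
    μ.condMoment M T.restrict y r
      ≤ ENNReal.ofReal (Real.cosh (r * ε + ε / 2) / Real.cosh (ε / 2)) ^ T.card
        * (μ.bind M y ^ r * μ.bind M y) := by
  induction T using Finset.induction_on with
  | empty =>
    rw [PMF.condMoment_of_forall_eq (fun _ _ => Subsingleton.elim _ _), Finset.card_empty,
      pow_zero, one_mul]
  | insert i T hi ih =>
    calc μ.condMoment M (insert i T).restrict y r
        ≤ ENNReal.ofReal (Real.cosh (r * ε + ε / 2) / Real.cosh (ε / 2))
          * μ.condMoment M T.restrict y r :=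
          PMF.condMoment_le_of_refines
            (fun x x' hxx' => Finset.restrict_eq_restrict_iff.2 fun j hj =>
              Finset.restrict_eq_restrict_iff.1 hxx' j (Finset.mem_insert_of_mem hj))
            hε hr y (fun x hx => h.condProb_insert_le_exp_mul_condProb hε.le hi hx y)
            fun x _ => h.condProb_le_exp_mul_condProb_insert hε.le hi x y
      _ ≤ _ := by
        rw [Finset.card_insert_of_notMem hi, pow_succ, mul_comm _ (ENNReal.ofReal _), mul_assoc]
        gcongr

lemma condProb_restrict_eq_bind (h : BayesianDP μ M 0) {x : ∀ j, α j} (hx : μ x ≠ 0) (y : γ)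
    (T : Finset (Fin n)) : μ.condProb M T.restrict x y = μ.bind M y := by
  induction T using Finset.induction_on with
  | empty => exact PMF.condProb_of_forall_eq (fun _ _ => Subsingleton.elim _ _) x y
  | insert i T hi ih =>
    have hle := h.condProb_insert_le_exp_mul_condProb le_rfl hi hx y
    have hge := h.condProb_le_exp_mul_condProb_insert le_rfl hi x y
    rw [Real.exp_zero, ENNReal.ofReal_one, one_mul] at hle hge
    exact (le_antisymm hle hge).trans ih

lemma apply_eq_bind (h : BayesianDP μ M ε) (hdeg : n = 0 ∨ ε = 0) {x : ∀ j, α j}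
    (hx : μ x ≠ 0) (y : γ) : M x y = μ.bind M y := by
  rw [← PMF.condProb_of_injective Finset.restrict_univ_injective hx]
  rcases hdeg with rfl | rfl
  · exact PMF.condProb_of_forall_eq (fun _ _ => funext fun j => j.1.elim0) x y
  · exact h.condProb_restrict_eq_bind hx y _

lemma tsum_mul_rpow_mul_le (h : BayesianDP μ M ε) (hε : 0 < ε) {r : ℝ} (hr : 0 ≤ r) (y : γ) :
    ∑' x, μ x * (M x y ^ r * M x y)
      ≤ ENNReal.ofReal (Real.cosh (r * ε + ε / 2) / Real.cosh (ε / 2)) ^ n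
        * (μ.bind M y ^ r * μ.bind M y) := by
  have hmoment := h.condMoment_restrict_le hε hr y Finset.univ
  rw [Finset.card_univ, Fintype.card_fin] at hmoment
  refine le_of_eq_of_le (tsum_congr fun x => ?_) hmoment
  rcases eq_or_ne (μ x) 0 with hx | hx
  · simp [hx]
  · rw [PMF.condProb_of_injective Finset.restrict_univ_injective hx]

lemma tsum_ite_lt_mul_rpow_le (h : BayesianDP μ M ε) (hε : 0 < ε) {r : ℝ} (hr : 0 ≤ r)
    (c : ℝ≥0∞) (y : γ) :
    (∑' x, if c * μ.bind M y < M x y then μ x * M x y else 0) * c ^ r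
      ≤ ENNReal.ofReal (Real.cosh (r * ε + ε / 2) / Real.cosh (ε / 2)) ^ n * μ.bind M y := by
  rcases eq_or_ne (μ.bind M y) 0 with hν | hν
  · have hzero : ∀ x, μ x * M x y = 0 := fun x =>
      le_antisymm (hν ▸ (PMF.bind_apply μ M y).symm ▸ ENNReal.le_tsum x) zero_le
    simp [hzero]
  have hνr : μ.bind M y ^ r ≠ 0 :=
    (ENNReal.rpow_pos (pos_iff_ne_zero.2 hν) (PMF.apply_ne_top _ y)).ne'
  have hνr' : μ.bind M y ^ r ≠ ⊤ := ENNReal.rpow_ne_top_of_nonneg hr (PMF.apply_ne_top _ y)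
  have hmarkov : (∑' x, if c * μ.bind M y < M x y then μ x * M x y else 0)
      * (c * μ.bind M y) ^ r
      ≤ ENNReal.ofReal (Real.cosh (r * ε + ε / 2) / Real.cosh (ε / 2)) ^ n
        * (μ.bind M y ^ r * μ.bind M y) := by
    rw [← ENNReal.tsum_mul_right]
    refine (ENNReal.tsum_le_tsum fun x => (ENNReal.ite_lt_mul_rpow_le hr).trans_eq ?_).trans
      (h.tsum_mul_rpow_mul_le hε hr y)
    ring
  rw [ENNReal.mul_rpow_of_nonneg _ _ hr] at hmarkov
  rw [← ENNReal.mul_le_mul_iff_left hνr hνr']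
  calc _ = (∑' x, if c * μ.bind M y < M x y then μ x * M x y else 0)
        * (c ^ r * μ.bind M y ^ r) := by ring
    _ ≤ _ := hmarkov
    _ = _ := by ring

lemma tsum_tail_le_exp (h : BayesianDP μ M ε) (hε : 0 < ε) {r : ℝ} (hr : 0 ≤ r) (E : ℝ) :
    ∑' y, ∑' x, (if ENNReal.ofReal (Real.exp E) * μ.bind M y < M x y then μ x * M x y else 0)
      ≤ ENNReal.ofReal (Real.exp (n * ((r * ε) ^ 2 / 2 + r * ε * (ε / 2)) - r * E)) := by
  set c := ENNReal.ofReal (Real.exp E)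
  have hc : c ^ r = ENNReal.ofReal (Real.exp (r * E)) := by
    rw [ENNReal.ofReal_rpow_of_nonneg (Real.exp_pos E).le hr, ← Real.exp_mul, mul_comm]
  have htotal : (∑' y, ∑' x, if c * μ.bind M y < M x y then μ x * M x y else 0) * c ^ r
      ≤ ENNReal.ofReal (Real.cosh (r * ε + ε / 2) / Real.cosh (ε / 2)) ^ n := by
    rw [← ENNReal.tsum_mul_right]
    refine (ENNReal.tsum_le_tsum fun y => h.tsum_ite_lt_mul_rpow_le hε hr c y).trans_eq ?_
    rw [ENNReal.tsum_mul_left, PMF.tsum_coe, mul_one]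
  rw [← ENNReal.le_div_iff_mul_le (by rw [hc]; simp [Real.exp_pos])
    (Or.inl (by rw [hc]; exact ENNReal.ofReal_ne_top))] at htotal
  calc _ ≤ _ := htotal
    _ ≤ ENNReal.ofReal (Real.exp ((r * ε) ^ 2 / 2 + r * ε * (ε / 2))) ^ n / c ^ r := by
        gcongr
        exact Real.cosh_add_div_cosh_le (by positivity) (by positivity)
    _ = _ := by
        rw [hc, ← ENNReal.ofReal_pow (Real.exp_pos _).le,
          ← ENNReal.ofReal_div_of_pos (Real.exp_pos _), ← Real.exp_nat_mul, ← Real.exp_sub]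

lemma tsum_tail_le (h : BayesianDP μ M ε) (hε : 0 ≤ ε) {β : ℝ} (hβ : 0 < β) (hβ2 : β ≤ 2) :
    ∑' y, ∑' x, (if ENNReal.ofReal (Real.exp (2 * ε ^ 2 * n
        + ε * √(2 * n * Real.log (2 / β)))) * μ.bind M y < M x y then μ x * M x y else 0)
      ≤ ENNReal.ofReal β := by
  by_cases hdeg : n = 0 ∨ ε = 0
  -- Markov's inequality is useless here (`E = 0`), but the output does not depend on the input.
  · refine le_of_eq_of_le (ENNReal.tsum_eq_zero.2 fun y => ENNReal.tsum_eq_zero.2 fun x => ?_)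
      zero_le
    rcases eq_or_ne (μ x) 0 with hx | hx
    · simp [hx]
    refine if_neg (not_lt.2 ?_)
    rw [h.apply_eq_bind hdeg hx]
    exact le_mul_of_one_le_left zero_le
      (ENNReal.one_le_ofReal.2 (Real.one_le_exp (by positivity)))
  rw [not_or] at hdeg
  have hεpos : 0 < ε := hε.lt_of_ne' hdeg.2
  set r := √(2 * Real.log (2 / β) / n) / ε
  have hrε : r * ε = √(2 * Real.log (2 / β) / n) := div_mul_cancel₀ _ hεpos.ne'
  refine (h.tsum_tail_le_exp hεpos (r := r) (by positivity) _).trans ?_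
  calc _ ≤ ENNReal.ofReal (Real.exp (Real.log β)) := ENNReal.ofReal_le_ofReal (Real.exp_le_exp.2
        (chernoff_exponent_le_log (Nat.pos_of_ne_zero hdeg.1) hβ hβ2 (by positivity) hrε))
    _ = _ := by rw [Real.exp_log hβ]

lemma toMeasure_joint_le [MeasurableSpace (∀ i, α i)] [MeasurableSpace γ]
    (h : BayesianDP μ M ε) (hε : 0 ≤ ε) {β : ℝ} (hβ : 0 < β) (hβ2 : β ≤ 2)
    {O : Set ((∀ i, α i) × γ)} (hO : MeasurableSet O) :
    (μ.bind fun x => (M x).map fun y => (x, y)).toMeasure O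
      ≤ ENNReal.ofReal (Real.exp (2 * ε ^ 2 * n + ε * √(2 * n * Real.log (2 / β))))
          * (μ.toMeasure.prod (μ.bind M).toMeasure) O + ENNReal.ofReal β := by
  rw [PMF.toMeasure_prod_toMeasure]
  refine (PMF.toMeasure_apply_le_mul_add _ _ _ hO).trans
    (add_le_add le_rfl (le_trans ?_ (h.tsum_tail_le hε hβ hβ2)))
  rw [ENNReal.tsum_prod', ENNReal.tsum_comm]
  refine ENNReal.tsum_le_tsum fun y => ENNReal.tsum_le_tsum fun x => ?_
  simp only [PMF.bind_map_prodMk_apply]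
  split_ifs with hjoint hmech
  · rfl
  · rw [mul_left_comm] at hjoint
    exact absurd (lt_of_mul_lt_mul_left' hjoint) hmech
  · exact zero_le
  · rfl

end BayesianDP

end BayesianPrivacy

/-- Theorem: if Y is ε-Bayesian differentially private, then for any β > 0 the β-approximate
max-information satisfies I_∞^β(X; Y(X)) ≤ (2ε²n + ε√(2n ln(2/β)))·log₂ e; i.e., for every
set O with P[(X,Y)∈O] > β, P[(X,Y)∈O] − β ≤ 2^{(2ε²n + ε√(2n ln(2/β)))·log₂ e} · P[X×Y ∈ O]. -/
theorem stmt2 {n : ℕ} {α : Fin n → Type*} {γ : Type*}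
    [MeasurableSpace (∀ i, α i)] [MeasurableSpace γ]
    (μ : PMF (∀ i, α i)) (M : (∀ i, α i) → PMF γ) (ε : ℝ) (hε : 0 ≤ ε)
    (hBDP : BayesianDP μ M ε) (β : ℝ) (hβ : 0 < β) :
    ∀ O : Set ((∀ i, α i) × γ), MeasurableSet O →
      β < (((μ.bind (fun x => (M x).map (fun y => (x, y)))).toMeasure) O).toReal →
      (((μ.bind (fun x => (M x).map (fun y => (x, y)))).toMeasure) O).toReal - β ≤
        (2 : ℝ) ^ ((2 * ε ^ 2 * n + ε * Real.sqrt (2 * n * Real.log (2 / β))) *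
            Real.logb 2 (Real.exp 1)) *
          ((μ.toMeasure.prod ((μ.bind M).toMeasure)) O).toReal := by
  intro O hO hβO
  have hβ2 : β ≤ 2 := by
    have := ENNReal.toReal_mono ENNReal.one_ne_top
      (prob_le_one (μ := (μ.bind fun x => (M x).map fun y => (x, y)).toMeasure) (s := O))
    rw [ENNReal.toReal_one] at this
    linarith
  have hbound := hBDP.toMeasure_joint_le hε hβ hβ2 hO
  have hprod_ne_top : ENNReal.ofReal (Real.exp (2 * ε ^ 2 * n
      + ε * √(2 * n * Real.log (2 / β)))) * (μ.toMeasure.prod (μ.bind M).toMeasure) O ≠ ⊤ :=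
    ENNReal.mul_ne_top ENNReal.ofReal_ne_top (measure_ne_top _ _)
  have hreal := ENNReal.toReal_mono (ENNReal.add_ne_top.2 ⟨hprod_ne_top, ENNReal.ofReal_ne_top⟩)
    hbound
  rw [ENNReal.toReal_add hprod_ne_top ENNReal.ofReal_ne_top, ENNReal.toReal_mul,
    ENNReal.toReal_ofReal (Real.exp_pos _).le, ENNReal.toReal_ofReal hβ.le] at hreal
  rw [Real.two_rpow_mul_logb_exp_one]
  linarith
end

section
/- Let X be a random database of n records drawn from distribution P, and Y an ε-Bayesian differentially private algorithm answering a query Q with global sensitivity Δ_Q, and let Y(P) denote the expectation of Y(X). If ε ≤ τ/(3 n Δ_Q), then P[|Y(X) − Y(P)| ≥ τ] ≤ 4·exp(−τ² / (9 n Δ_Q²)). -/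
open MeasureTheory

/-- Generalization bound from ε-Bayesian differential privacy. The joint distribution of the
database X and the real-valued answer Y(X) is the probability measure J on α × ℝ; YP is the
expectation of Y(X). Assuming (as established in the paper) the max-information consequence of
ε-BDP (`hmax`, the consequence of I_∞^β ≤ (2ε²n + ε√(2n ln(2/β)))·log₂ e) and the McDiarmid-type
concentration bound for the independent product (`hconc`), if ε ≤ τ/(3nΔ) then
P[|Y(X) − Y(P)| ≥ τ] ≤ 4·exp(−τ²/(9nΔ²)). -/
theorem stmt6 {α : Type*} [MeasurableSpace α]
    (J : Measure (α × ℝ)) [IsProbabilityMeasure J]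
    (n : ℕ) (hn : 1 ≤ n) (Δ τ ε YP : ℝ) (hΔ : 0 < Δ) (hτ : 0 < τ) (hε0 : 0 ≤ ε)
    (hYP : YP = ∫ p, p.2 ∂J)
    (hmax : ∀ β : ℝ, 0 < β → ∀ O : Set (α × ℝ),
      (J O).toReal ≤
        (2 : ℝ) ^ ((2 * ε ^ 2 * n + ε * Real.sqrt (2 * n * Real.log (2 / β))) *
            Real.logb 2 (Real.exp 1)) * ((J.fst.prod J.snd) O).toReal + β)
    (hconc : (J.fst.prod J.snd) {p : α × ℝ | τ ≤ |p.2 - YP|} ≤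
      ENNReal.ofReal (2 * Real.exp (-τ ^ 2 / (2 * n * Δ ^ 2))))
    (hεb : ε ≤ τ / (3 * n * Δ)) :
    (J {p : α × ℝ | τ ≤ |p.2 - YP|}).toReal ≤
      4 * Real.exp (-τ ^ 2 / (9 * n * Δ ^ 2)) := by
  have hn' : (0:ℝ) < n := by exact_mod_cast Nat.lt_of_lt_of_le Nat.zero_lt_one hn
  set k : ℝ := τ ^ 2 / (9 * n * Δ ^ 2) with hk
  have hk0 : 0 < k := by positivity
  have hβ : 0 < 2 * Real.exp (-k) := by positivity
  have hlog : Real.log (2 / (2 * Real.exp (-k))) = k := by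
    have h2 : 2 / (2 * Real.exp (-k)) = Real.exp k := by
      rw [Real.exp_neg]; field_simp
    rw [h2, Real.log_exp]
  have hmain := hmax (2 * Real.exp (-k)) hβ {p : α × ℝ | τ ≤ |p.2 - YP|}
  rw [hlog] at hmain
  have hlog2 : Real.log 2 ≠ 0 := ne_of_gt (Real.log_pos (by norm_num))
  have hE : (2 : ℝ) ^ ((2 * ε ^ 2 * n + ε * Real.sqrt (2 * n * k)) *
      Real.logb 2 (Real.exp 1)) = Real.exp (2 * ε ^ 2 * n + ε * Real.sqrt (2 * n * k)) := by
    rw [Real.rpow_def_of_pos (by norm_num : (0:ℝ) < 2)]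
    congr 1
    simp only [Real.logb, Real.log_exp]
    field_simp
  rw [hE] at hmain
  have hprod : ((J.fst.prod J.snd) {p : α × ℝ | τ ≤ |p.2 - YP|}).toReal ≤
      2 * Real.exp (-τ ^ 2 / (2 * n * Δ ^ 2)) :=
    ENNReal.toReal_le_of_le_ofReal (by positivity) hconc
  -- bound the exponent
  have hε2 : ε ^ 2 ≤ k / n := by
    have h1 : ε ^ 2 ≤ (τ / (3 * n * Δ)) ^ 2 := by
      apply pow_le_pow_left₀ hε0 hεb
    calc ε ^ 2 ≤ (τ / (3 * n * Δ)) ^ 2 := h1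
      _ = k / n := by rw [hk]; field_simp; ring
  set s : ℝ := Real.sqrt (2 * n * k) with hs
  have hs0 : 0 ≤ s := Real.sqrt_nonneg _
  have hs2 : s ^ 2 = 2 * n * k := Real.sq_sqrt (by positivity)
  have hεs : ε * s ≤ Real.sqrt 2 * k := by
    have hsq2 : (Real.sqrt 2) ^ 2 = 2 := Real.sq_sqrt (by norm_num)
    have hsq2n : 0 ≤ Real.sqrt 2 := Real.sqrt_nonneg 2
    have h1 : (ε * s) ^ 2 ≤ 2 * k ^ 2 := by
      have : ε ^ 2 * (2 * n * k) ≤ (k / n) * (2 * n * k) := by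
        apply mul_le_mul_of_nonneg_right hε2 (by positivity)
      calc (ε * s) ^ 2 = ε ^ 2 * (2 * n * k) := by rw [mul_pow, hs2]
        _ ≤ (k / n) * (2 * n * k) := this
        _ = 2 * k ^ 2 := by field_simp
    nlinarith [mul_nonneg hε0 hs0, mul_nonneg hsq2n hk0.le]
  have hsqrt2 : Real.sqrt 2 ≤ 3/2 := by
    nlinarith [Real.sq_sqrt (by norm_num : (0:ℝ) ≤ 2), Real.sqrt_nonneg 2]
  have hEbnd : 2 * ε ^ 2 * n + ε * s ≤ (7/2) * k := by
    have h1 : 2 * ε ^ 2 * n ≤ 2 * k := by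
      have := mul_le_mul_of_nonneg_right hε2 hn'.le
      calc 2 * ε ^ 2 * n = 2 * (ε ^ 2 * n) := by ring
        _ ≤ 2 * (k / n * n) := by linarith
        _ = 2 * k := by field_simp
    have h2 : ε * s ≤ (3/2) * k := le_trans hεs (by nlinarith)
    linarith
  have hexp45 : -τ ^ 2 / (2 * n * Δ ^ 2) = -(9/2 * k) := by
    rw [hk]; field_simp
  have hterm1 : Real.exp (2 * ε ^ 2 * n + ε * s) * (2 * Real.exp (-τ ^ 2 / (2 * n * Δ ^ 2)))
      ≤ 2 * Real.exp (-k) := by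
    rw [hexp45]
    have h1 : Real.exp (2 * ε ^ 2 * ↑n + ε * s) ≤ Real.exp ((7/2) * k) :=
      Real.exp_le_exp.mpr hEbnd
    have h2 : Real.exp ((7/2) * k) * Real.exp (-(9/2 * k)) = Real.exp (-k) := by
      rw [← Real.exp_add]; ring_nf
    have h3 := mul_le_mul_of_nonneg_right h1 (Real.exp_pos (-(9/2 * k))).le
    calc Real.exp (2 * ε ^ 2 * ↑n + ε * s) * (2 * Real.exp (-(9/2 * k)))
        = 2 * (Real.exp (2 * ε ^ 2 * ↑n + ε * s) * Real.exp (-(9/2 * k))) := by ring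
      _ ≤ 2 * (Real.exp ((7/2) * k) * Real.exp (-(9/2 * k))) := by linarith
      _ = 2 * Real.exp (-k) := by rw [h2]
  have hfinal : (J {p : α × ℝ | τ ≤ |p.2 - YP|}).toReal ≤ 4 * Real.exp (-k) := by
    calc (J {p : α × ℝ | τ ≤ |p.2 - YP|}).toReal
        ≤ Real.exp (2 * ε ^ 2 * n + ε * s) *
          ((J.fst.prod J.snd) {p : α × ℝ | τ ≤ |p.2 - YP|}).toReal + 2 * Real.exp (-k) := hmain
      _ ≤ Real.exp (2 * ε ^ 2 * n + ε * s) * (2 * Real.exp (-τ ^ 2 / (2 * n * Δ ^ 2)))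
          + 2 * Real.exp (-k) := by
          gcongr
      _ ≤ 2 * Real.exp (-k) + 2 * Real.exp (-k) := by linarith
      _ = 4 * Real.exp (-k) := by ring
  calc (J {p : α × ℝ | τ ≤ |p.2 - YP|}).toReal ≤ 4 * Real.exp (-k) := hfinal
    _ = 4 * Real.exp (-τ ^ 2 / (9 * n * Δ ^ 2)) := by rw [hk]; ring_nf
end

section
/- For any i ≥ 1 and any n ≥ 1, ε > 0, β ∈ (0,2), with t_i := 2ε²n + ε√(2n·ln(2^i/β)): t_{i+1} − t_i²/(2nε²) ≤ ε√(2n)·(√(ln(2^{i+1}/β)) − 2√(ln(2^i/β))) − ln(2^i/β) ≤ −ln(2^i/β), and hence exp(t_{i+1} − t_i²/(2nε²)) ≤ β/2^i. -/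
/-- Key computation in the peeling argument: with t_j := 2ε²n + ε√(2n ln(2^j/β)),
t_{i+1} − t_i²/(2nε²) ≤ ε√(2n)(√(ln(2^{i+1}/β)) − 2√(ln(2^i/β))) − ln(2^i/β) ≤ −ln(2^i/β),
hence exp(t_{i+1} − t_i²/(2nε²)) ≤ β/2^i. (We assume β < 1 for safety, as in the context.) -/
theorem stmt16 (i n : ℕ) (hi : 1 ≤ i) (hn : 1 ≤ n) (ε β : ℝ) (hε : 0 < ε)
    (hβ0 : 0 < β) (hβ1 : β < 1)
    (t : ℕ → ℝ)
    (ht : ∀ j : ℕ, t j = 2 * ε ^ 2 * n + ε * Real.sqrt (2 * n * Real.log (2 ^ j / β))) :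
    t (i + 1) - (t i) ^ 2 / (2 * n * ε ^ 2) ≤
        ε * Real.sqrt (2 * n) *
            (Real.sqrt (Real.log (2 ^ (i + 1) / β)) - 2 * Real.sqrt (Real.log (2 ^ i / β))) -
          Real.log (2 ^ i / β) ∧
      ε * Real.sqrt (2 * n) *
            (Real.sqrt (Real.log (2 ^ (i + 1) / β)) - 2 * Real.sqrt (Real.log (2 ^ i / β))) -
          Real.log (2 ^ i / β) ≤ -Real.log (2 ^ i / β) ∧
      Real.exp (t (i + 1) - (t i) ^ 2 / (2 * n * ε ^ 2)) ≤ β / 2 ^ i := by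
  have hn' : (0:ℝ) < n := by exact_mod_cast hn
  have h2 : (0:ℝ) < Real.log 2 := Real.log_pos (by norm_num)
  have hlogβ : Real.log β < 0 := Real.log_neg hβ0 hβ1
  have hi' : (1:ℝ) ≤ (i:ℝ) := by exact_mod_cast hi
  set Li := Real.log (2 ^ i / β) with hLi
  set Lj := Real.log (2 ^ (i+1) / β) with hLj
  have hLival : Li = i * Real.log 2 - Real.log β := by
    rw [hLi, Real.log_div (by positivity) (ne_of_gt hβ0), Real.log_pow]
  have hLjval : Lj = (i+1) * Real.log 2 - Real.log β := by
    rw [hLj, Real.log_div (by positivity) (ne_of_gt hβ0), Real.log_pow]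
    push_cast; ring
  have hLi' : Real.log 2 ≤ Li := by rw [hLival]; nlinarith
  have hLipos : 0 < Li := lt_of_lt_of_le h2 hLi'
  have hLjpos : 0 < Lj := by rw [hLjval]; nlinarith
  have hLj2 : Lj ≤ 2 * Li := by rw [hLival, hLjval]; nlinarith
  have hsj : Real.sqrt Lj ≤ 2 * Real.sqrt Li := by
    calc Real.sqrt Lj ≤ Real.sqrt (2^2 * Li) := Real.sqrt_le_sqrt (by nlinarith)
      _ = 2 * Real.sqrt Li := by
          rw [Real.sqrt_mul (by positivity), Real.sqrt_sq (by norm_num)]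
  have hmulj : Real.sqrt (2*(n:ℝ)*Lj) = Real.sqrt (2*(n:ℝ)) * Real.sqrt Lj :=
    Real.sqrt_mul (by positivity) _
  have hmuli : Real.sqrt (2*(n:ℝ)*Li) = Real.sqrt (2*(n:ℝ)) * Real.sqrt Li :=
    Real.sqrt_mul (by positivity) _
  have hsq2n : Real.sqrt (2*(n:ℝ)) ^ 2 = 2*(n:ℝ) := Real.sq_sqrt (by positivity)
  have hsqi : Real.sqrt Li ^ 2 = Li := Real.sq_sqrt hLipos.le
  have hprod : (Real.sqrt (2*(n:ℝ)) * Real.sqrt Li) ^ 2 = 2*(n:ℝ)*Li := by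
    rw [mul_pow, hsq2n, hsqi]
  have hti2 : t i ^ 2 = (2*ε^2*n)^2 + 2*(2*ε^2*n)*(ε*Real.sqrt (2*(n:ℝ))*Real.sqrt Li)
      + ε^2*(2*n*Li) := by
    rw [ht, hmuli]; linear_combination (ε^2) * hprod
  have hdiv : t i ^ 2 / (2 * n * ε ^ 2) =
      2*ε^2*n + 2*ε*Real.sqrt (2*(n:ℝ))*Real.sqrt Li + Li := by
    rw [hti2]; field_simp
  have heq : t (i+1) - t i ^ 2 / (2 * n * ε ^ 2) =
      ε * Real.sqrt (2*(n:ℝ)) * (Real.sqrt Lj - 2 * Real.sqrt Li) - Li := by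
    rw [ht, hdiv, hmulj]; ring
  have hmid : ε * Real.sqrt (2*(n:ℝ)) * (Real.sqrt Lj - 2 * Real.sqrt Li) - Li ≤ -Li := by
    have h1 : ε * Real.sqrt (2*(n:ℝ)) * (Real.sqrt Lj - 2 * Real.sqrt Li) ≤ 0 := by
      apply mul_nonpos_of_nonneg_of_nonpos
      · positivity
      · linarith
    linarith
  refine ⟨le_of_eq heq, hmid, ?_⟩
  have : Real.exp (t (i+1) - t i ^ 2 / (2 * n * ε ^ 2)) ≤ Real.exp (-Li) := by
    apply Real.exp_le_exp.mpr; rw [heq]; exact hmid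
  calc Real.exp (t (i+1) - t i ^ 2 / (2 * n * ε ^ 2)) ≤ Real.exp (-Li) := this
    _ = β / 2 ^ i := by
        rw [hLi, Real.exp_neg, Real.exp_log (by positivity)]
        field_simp
end

section
/- Suppose for random variables X (database) and Y = Y(X) (algorithm output) there exists a set 𝓑 with P[(X,Y) ∈ 𝓑] ≤ β such that for every (x,y) ∉ 𝓑, P[X = x, Y = y] ≤ e^{t}·P[X = x]·P[Y = y]. Then the β-approximate max-information satisfies I_∞^β(X; Y) ≤ t·log₂(e). -/
/-!
Split an event `O` into `O ∩ 𝓑` and `O \ 𝓑`. The first part has probability at most `β`; on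
the second the joint mass is pointwise at most `e^t` times the product mass, so summing gives
`P[(X,Y) ∈ O] ≤ β + e^t · P[X × Y ∈ O]`, and `2 ^ (t · log₂ e) = e^t`.
-/

open MeasureTheory
open scoped ENNReal

namespace PMF

variable {α : Type*}

theorem toMeasure_eq_sum_smul_dirac [MeasurableSpace α] (p : PMF α) :
    p.toMeasure = Measure.sum fun a => p a • Measure.dirac a := by
  ext s hs
  rw [p.toMeasure_apply hs, Measure.sum_apply _ hs]
  refine tsum_congr fun a => ?_
  by_cases ha : a ∈ s <;> simp [ha, Measure.dirac_apply' _ hs]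

theorem lintegral_toMeasure [MeasurableSpace α] (p : PMF α) {f : α → ℝ≥0∞}
    (hf : Measurable f) : ∫⁻ a, f a ∂p.toMeasure = ∑' a, p a * f a := by
  rw [toMeasure_eq_sum_smul_dirac, lintegral_sum_measure]
  exact tsum_congr fun a => by rw [lintegral_smul_measure, lintegral_dirac' _ hf, smul_eq_mul]

theorem toMeasure_prod_toMeasure_apply {γ : Type*} [MeasurableSpace α] [MeasurableSpace γ]
    (p : PMF α) (q : PMF γ) {s : Set (α × γ)} (hs : MeasurableSet s) :
    p.toMeasure.prod q.toMeasure s = ∑' z, s.indicator (fun z => p z.1 * q z.2) z := by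
  rw [Measure.prod_apply hs, p.lintegral_toMeasure (measurable_measure_prodMk_left hs),
    ENNReal.tsum_prod']
  refine tsum_congr fun x => ?_
  rw [q.toMeasure_apply (measurable_prodMk_left hs), ← ENNReal.tsum_mul_left]
  refine tsum_congr fun y => ?_
  by_cases h : (x, y) ∈ s <;> simp [h]

theorem toOuterMeasure_le_add_mul_tsum_indicator (p : PMF α) {B : Set α} {c : ℝ≥0∞}
    {f : α → ℝ≥0∞} (h : ∀ a, a ∉ B → p a ≤ c * f a) (s : Set α) :
    p.toOuterMeasure s ≤ p.toOuterMeasure B + c * ∑' a, s.indicator f a := by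
  refine (measure_le_inter_add_sdiff (μ := p.toOuterMeasure) s B).trans (add_le_add ?_ ?_)
  · exact p.toOuterMeasure.mono Set.inter_subset_right
  · rw [toOuterMeasure_apply, ← ENNReal.tsum_mul_left]
    refine ENNReal.tsum_le_tsum fun a => ?_
    by_cases ha : a ∈ s \ B
    · rw [Set.indicator_of_mem ha, Set.indicator_of_mem ha.1]
      exact h a ha.2
    · rw [Set.indicator_of_notMem ha]
      exact zero_le

end PMF

theorem Real.rpow_mul_logb_exp_one {b : ℝ} (hb₀ : 0 < b) (hb₁ : b ≠ 1) (t : ℝ) :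
    b ^ (t * Real.logb b (Real.exp 1)) = Real.exp t := by
  rw [mul_comm, Real.rpow_mul hb₀.le, Real.rpow_logb hb₀ hb₁ (Real.exp_pos 1),
    Real.exp_one_rpow]

/-- If there is a set 𝓑 with P[(X,Y) ∈ 𝓑] ≤ β such that outside 𝓑 the joint density is bounded
by e^t times the product of the marginal densities, then the β-approximate max-information
satisfies I_∞^β(X;Y) ≤ t·log₂ e; i.e., for every measurable O with P[(X,Y)∈O] > β,
P[(X,Y)∈O] − β ≤ 2^{t·log₂ e} · P[X×Y ∈ O]. -/
theorem stmt19 {α γ : Type*} [MeasurableSpace α] [MeasurableSpace γ]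
    (J : PMF (α × γ)) (β t : ℝ) (hβ : 0 < β)
    (𝓑 : Set (α × γ)) (h𝓑 : J.toMeasure 𝓑 ≤ ENNReal.ofReal β)
    (hpt : ∀ p : α × γ, p ∉ 𝓑 →
      J p ≤ ENNReal.ofReal (Real.exp t) *
        ((J.map Prod.fst) p.1 * (J.map Prod.snd) p.2)) :
    ∀ O : Set (α × γ), MeasurableSet O → β < (J.toMeasure O).toReal →
      (J.toMeasure O).toReal - β ≤
        (2 : ℝ) ^ (t * Real.logb 2 (Real.exp 1)) *
          (((J.map Prod.fst).toMeasure.prod ((J.map Prod.snd).toMeasure)) O).toReal := by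
  intro O hO _
  set Q := (J.map Prod.fst).toMeasure.prod (J.map Prod.snd).toMeasure
  have hsplit : J.toMeasure O ≤ ENNReal.ofReal (β + Real.exp t * (Q O).toReal) := calc
    J.toMeasure O = J.toOuterMeasure O := J.toMeasure_apply_eq_toOuterMeasure_apply hO
    _ ≤ J.toOuterMeasure 𝓑 + ENNReal.ofReal (Real.exp t) *
          ∑' z, O.indicator (fun z => (J.map Prod.fst) z.1 * (J.map Prod.snd) z.2) z :=
      J.toOuterMeasure_le_add_mul_tsum_indicator hpt O
    _ ≤ ENNReal.ofReal β + ENNReal.ofReal (Real.exp t) * Q O := by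
      rw [PMF.toMeasure_prod_toMeasure_apply _ _ hO]
      gcongr
      exact (J.toOuterMeasure_apply_le_toMeasure_apply 𝓑).trans h𝓑
    _ = ENNReal.ofReal (β + Real.exp t * (Q O).toReal) := by
      rw [ENNReal.ofReal_add hβ.le (by positivity), ENNReal.ofReal_mul (Real.exp_pos t).le,
        ENNReal.ofReal_toReal (measure_ne_top Q O)]
  rw [Real.rpow_mul_logb_exp_one two_pos (by norm_num) t]
  linarith [ENNReal.toReal_le_of_le_ofReal (by positivity) hsplit]
end
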